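/- arXiv:math/0007010 — 6 statements merged into one kernel-verified Lean document; each statement's English description precedes it below -/
import Mathlib

section
/- Let η : ℝ → ℝ be defined by η(t) = −t log t for t > 0 and η(0) = 0. Then for every real number t ≥ 0, one has η(t) = ∫₀^∞ (1 − t/(1+x) − x/(t+x)) dx, where the integral is the Lebesgue integral over the interval (0, ∞). -/
open MeasureTheory

/-- The entropy function `η(t) = −t log t` (with `η(0) = 0`). -/
noncomputable def eta (t : ℝ) : ℝ := -(t * Real.log t)

open Set Filter Topology in
/-- Integral representation of the entropy function:
for `t ≥ 0`, `η(t) = ∫₀^∞ (1 − t/(1+x) − x/(t+x)) dx`. -/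
theorem eta_eq_integral (t : ℝ) (ht : 0 ≤ t) :
    eta t = ∫ x in Set.Ioi (0 : ℝ), (1 - t / (1 + x) - x / (t + x)) := by
  rcases eq_or_lt_of_le ht with h0 | h0
  · subst h0
    rw [setIntegral_congr_fun measurableSet_Ioi (g := fun _ => (0:ℝ))
      (fun x hx => by
        simp only [Set.mem_Ioi] at hx
        field_simp
        ring)]
    simp [eta]
  · have hgf : ∀ x ∈ Ioi (0:ℝ), (1 - t / (1 + x) - x / (t + x)) = t / (t + x) - t / (1 + x) := by
      intro x hx
      simp only [Set.mem_Ioi] at hx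
      have h1 : (1:ℝ) + x ≠ 0 := by positivity
      have h2 : t + x ≠ 0 := by positivity
      field_simp
      ring
    rw [setIntegral_congr_fun measurableSet_Ioi hgf]
    set F : ℝ → ℝ := fun x => t * Real.log (t + x) - t * Real.log (1 + x) with hF
    have hderiv : ∀ x ∈ Ioi (0:ℝ), HasDerivAt F (t / (t + x) - t / (1 + x)) x := by
      intro x hx
      simp only [Set.mem_Ioi] at hx
      have h1 : HasDerivAt (fun x : ℝ => t + x) 1 x := (hasDerivAt_id x).const_add t
      have h2 : HasDerivAt (fun x : ℝ => 1 + x) 1 x := (hasDerivAt_id x).const_add 1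
      have h3 := ((h1.log (by positivity)).const_mul t).sub ((h2.log (by positivity)).const_mul t)
      convert h3 using 1
      have ha : t + x ≠ 0 := by positivity
      have hb : (1:ℝ) + x ≠ 0 := by positivity
      case e'_9 => ring
      all_goals rfl
    have hcont : ContinuousWithinAt F (Ici (0:ℝ)) 0 := by
      have c1 : ContinuousAt (fun x : ℝ => Real.log (t + x)) 0 :=
        (Real.continuousAt_log (by simpa using h0.ne')).comp
          ((continuous_const.add continuous_id).continuousAt)
      have c2 : ContinuousAt (fun x : ℝ => Real.log (1 + x)) 0 :=
        (Real.continuousAt_log (by norm_num)).comp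
          ((continuous_const.add continuous_id).continuousAt)
      have : ContinuousAt F 0 := (c1.const_mul t).sub (c2.const_mul t)
      exact this.continuousWithinAt
    have htop : Tendsto F atTop (𝓝 0) := by
      have hr : Tendsto (fun x : ℝ => (t + x) / (1 + x)) atTop (𝓝 1) := by
        have h1 : Tendsto (fun x : ℝ => 1 + (t - 1) / (1 + x)) atTop (𝓝 (1 + 0)) :=
          tendsto_const_nhds.add (Tendsto.div_atTop tendsto_const_nhds
            (tendsto_atTop_add_const_left _ _ tendsto_id))
        rw [add_zero] at h1
        refine h1.congr' ?_
        filter_upwards [eventually_gt_atTop (0 : ℝ)] with x hx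
        have : (1 : ℝ) + x ≠ 0 := by positivity
        field_simp
        ring
      have hlog : Tendsto (fun x : ℝ => t * Real.log ((t + x) / (1 + x))) atTop
          (𝓝 (t * Real.log 1)) :=
        ((Real.continuousAt_log one_ne_zero).tendsto.comp hr).const_mul t
      rw [Real.log_one, mul_zero] at hlog
      refine hlog.congr' ?_
      filter_upwards [eventually_gt_atTop (0 : ℝ)] with x hx
      rw [Real.log_div (by positivity) (by positivity), mul_sub]
    have hF0 : F 0 = t * Real.log t := by simp [hF]
    rcases le_or_gt t 1 with hle | hlt
    · have hnn : ∀ x ∈ Ioi (0:ℝ), 0 ≤ t / (t + x) - t / (1 + x) := by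
        intro x hx
        simp only [Set.mem_Ioi] at hx
        rw [sub_nonneg]
        exact div_le_div_of_nonneg_left ht (by positivity) (by linarith)
      rw [integral_Ioi_of_hasDerivAt_of_nonneg hcont hderiv hnn htop, hF0, eta]
      ring
    · have hderiv' : ∀ x ∈ Ioi (0:ℝ),
          HasDerivAt (fun x => -F x) (-(t / (t + x) - t / (1 + x))) x :=
        fun x hx => (hderiv x hx).neg
      have hnn : ∀ x ∈ Ioi (0:ℝ), 0 ≤ -(t / (t + x) - t / (1 + x)) := by
        intro x hx
        simp only [Set.mem_Ioi] at hx
        rw [neg_sub, sub_nonneg]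
        exact div_le_div_of_nonneg_left ht (by positivity) (by linarith)
      have h := integral_Ioi_of_hasDerivAt_of_nonneg hcont.neg hderiv' hnn (htop.neg.congr (by simp))
      rw [integral_neg] at h
      rw [eta, ← neg_neg (∫ x in Ioi (0:ℝ), (t / (t + x) - t / (1 + x))), h, Pi.neg_apply, hF0]
      simp
end

section
/- Fix a nonempty finite index set of cardinality n and let M be the algebra of n×n complex matrices with normalized trace τ(A) = Tr(A)/n. Let x, y ∈ M be positive semidefinite. Then η(τ(x+y)) − τ(η(x+y)) ≤ (η(τ(x)) − τ(η(x))) + (η(τ(y)) − τ(η(y))). -/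
/-!
Diagonalize `x + y = U diag(ν) U*` and let `a`, `b` be the diagonals of `U* x U` and `U* y U`,
so `a + b = ν` with `a, b ≥ 0`. If `V` diagonalizes `x` with eigenvalues `λ`, then `a = P λ` for
the doubly stochastic matrix `P = (|(U* V)ⱼᵢ|²)`, so by concavity of `η` the unnormalized defect
`D(v) = η(∑ vᵢ) − ∑ η(vᵢ)` satisfies `D(a) ≤ D(λ)`, and likewise for `y`. This reduces the claim to
`D(a + b) ≤ D(a) + D(b)` for nonnegative vectors, which is the log sum inequality for `a` and `b`
against `a + b`. The normalization by `n` only contributes a term linear in the trace.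
-/

open scoped ComplexOrder

/-- The normalized trace `τ(A) = Tr(A)/n`, as a real number. -/
noncomputable def tauR {n : Type*} [Fintype n] [DecidableEq n] (A : Matrix n n ℂ) : ℝ :=
  (A.trace).re / (Fintype.card n)

/-- `τ(η(A))` for a Hermitian matrix `A`: `(1/n)·∑ η(λ_l)` over the eigenvalues of `A`
(junk value `0` for non-Hermitian matrices). -/
noncomputable def tauEta {n : Type*} [Fintype n] [DecidableEq n] (A : Matrix n n ℂ) : ℝ :=
  if hA : A.IsHermitian then (∑ i, eta (hA.eigenvalues i)) / (Fintype.card n) else 0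

open Finset Matrix Real

theorem eta_eq_negMulLog : eta = negMulLog := negMulLog_eq_neg.symm

theorem mul_log_div_add_mul_log_div {a b : ℝ} (ha : 0 ≤ a) (hb : 0 ≤ b) :
    a * log (a / (a + b)) + b * log (b / (a + b)) =
      negMulLog (a + b) - negMulLog a - negMulLog b := by
  rcases ha.eq_or_lt with rfl | ha
  · simp
  rcases hb.eq_or_lt with rfl | hb
  · simp
  rw [log_div ha.ne' (by positivity), log_div hb.ne' (by positivity)]
  simp only [negMulLog]
  ring

theorem mul_log_add_sub_le_mul_log_div {w v c : ℝ} (hw : 0 ≤ w) (hv : 0 ≤ v)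
    (hwv : v = 0 → w = 0) (hc : 0 < c) : w * log c + w - c * v ≤ w * log (w / v) := by
  rcases hw.eq_or_lt with rfl | hw
  · simpa using mul_nonneg hc.le hv
  have hv : 0 < v := hv.lt_of_ne fun h => hw.ne' (hwv h.symm)
  have h := one_sub_inv_le_log_of_pos (x := w / v / c) (by positivity)
  rw [log_div (by positivity) hc.ne', inv_div, div_div_eq_mul_div] at h
  have h' := mul_le_mul_of_nonneg_left h hw.le
  rw [mul_sub, mul_one, mul_div_cancel₀ _ hw.ne'] at h'
  linarith

theorem sum_mul_log_div_sum_le {ι : Type*} [Fintype ι] {w v : ι → ℝ} (hw : 0 ≤ w) (hv : 0 ≤ v)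
    (hwv : ∀ i, v i = 0 → w i = 0) :
    (∑ i, w i) * log ((∑ i, w i) / ∑ i, v i) ≤ ∑ i, w i * log (w i / v i) := by
  rcases (Fintype.sum_nonneg hw).eq_or_lt with hW | hW
  · have hw0 := (sum_eq_zero_iff_of_nonneg fun i _ => hw i).mp hW.symm
    simp [hw0]
  have hV : 0 < ∑ i, v i := by
    refine (Fintype.sum_nonneg hv).lt_of_ne fun hV => hW.ne' ?_
    have hv0 := (sum_eq_zero_iff_of_nonneg fun i _ => hv i).mp hV.symm
    exact sum_eq_zero fun i hi => hwv i (hv0 i hi)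
  set c := (∑ i, w i) / ∑ i, v i
  calc (∑ i, w i) * log c = ∑ i, (w i * log c + w i - c * v i) := by
        rw [sum_sub_distrib, sum_add_distrib, ← sum_mul, ← mul_sum, div_mul_cancel₀ _ hV.ne']
        ring
    _ ≤ ∑ i, w i * log (w i / v i) := sum_le_sum fun i _ =>
        mul_log_add_sub_le_mul_log_div (hw i) (hv i) (hwv i) (div_pos hW hV)

noncomputable def entropyDefect {ι : Type*} [Fintype ι] (a : ι → ℝ) : ℝ :=
  negMulLog (∑ i, a i) - ∑ i, negMulLog (a i)

theorem entropyDefect_add_le {ι : Type*} [Fintype ι] {a b : ι → ℝ} (ha : 0 ≤ a) (hb : 0 ≤ b) :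
    entropyDefect (a + b) ≤ entropyDefect a + entropyDefect b := by
  have hzero (i : ι) : (a + b) i = 0 → a i = 0 ∧ b i = 0 :=
    (add_eq_zero_iff_of_nonneg (ha i) (hb i)).mp
  have hsum : ∑ i, (a + b) i = ∑ i, a i + ∑ i, b i := sum_add_distrib
  have hlog_sum_a := sum_mul_log_div_sum_le ha (add_nonneg ha hb) fun i h => (hzero i h).1
  have hlog_sum_b := sum_mul_log_div_sum_le hb (add_nonneg ha hb) fun i h => (hzero i h).2
  rw [hsum] at hlog_sum_a hlog_sum_b
  have htotal := mul_log_div_add_mul_log_div (Fintype.sum_nonneg ha) (Fintype.sum_nonneg hb)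
  have hterms : ∑ i, (a i * log (a i / (a + b) i) + b i * log (b i / (a + b) i)) =
      ∑ i, (negMulLog ((a + b) i) - negMulLog (a i) - negMulLog (b i)) :=
    sum_congr rfl fun i _ => mul_log_div_add_mul_log_div (ha i) (hb i)
  simp only [sum_add_distrib, sum_sub_distrib] at hterms
  simp only [entropyDefect, hsum]
  linarith

section MatrixEntropyDefect

variable {n : Type*} [Fintype n] [DecidableEq n]

theorem ConcaveOn.sum_le_sum_mulVec {s : Set ℝ} {f : ℝ → ℝ} (hf : ConcaveOn ℝ s f)
    {P : Matrix n n ℝ} (hP : P ∈ doublyStochastic ℝ n) {x : n → ℝ} (hx : ∀ i, x i ∈ s) :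
    ∑ i, f (x i) ≤ ∑ i, f ((P *ᵥ x) i) :=
  calc ∑ i, f (x i) = ∑ i, (P *ᵥ (f ∘ x)) i := (sum_mulVec_of_mem_doublyStochastic hP).symm
    _ ≤ ∑ i, f ((P *ᵥ x) i) := sum_le_sum fun i _ =>
        hf.le_map_sum (fun _ _ => nonneg_of_mem_doublyStochastic hP)
          (sum_row_of_mem_doublyStochastic hP i) fun j _ => hx j

theorem entropyDefect_mulVec_le {P : Matrix n n ℝ} (hP : P ∈ doublyStochastic ℝ n) {x : n → ℝ}
    (hx : 0 ≤ x) : entropyDefect (P *ᵥ x) ≤ entropyDefect x := by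
  have := concaveOn_negMulLog.sum_le_sum_mulVec hP fun i => Set.mem_Ici.mpr (hx i)
  rw [entropyDefect, entropyDefect, sum_mulVec_of_mem_doublyStochastic hP]
  linarith

theorem map_normSq_mem_doublyStochastic {U : Matrix n n ℂ} (hU : U ∈ unitaryGroup n ℂ) :
    U.map Complex.normSq ∈ doublyStochastic ℝ n := by
  rw [mem_doublyStochastic_iff_sum]
  refine ⟨fun i j => Complex.normSq_nonneg _, fun i => ?_, fun j => ?_⟩
  · have h := congr_fun₂ (mem_unitaryGroup_iff.mp hU) i i
    simp only [mul_apply, star_apply, RCLike.star_def, Complex.mul_conj, one_apply_eq] at h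
    exact_mod_cast h
  · have h := congr_fun₂ (mem_unitaryGroup_iff'.mp hU) j j
    simp only [mul_apply, star_apply, RCLike.star_def, mul_comm (starRingEnd ℂ _),
      Complex.mul_conj, one_apply_eq] at h
    exact_mod_cast h

theorem Matrix.IsHermitian.star_mul_mul_diag {A : Matrix n n ℂ} (hA : A.IsHermitian)
    (U : Matrix n n ℂ) (j : n) :
    (star U * A * U) j j =
      (((star U * hA.eigenvectorUnitary).map Complex.normSq *ᵥ hA.eigenvalues) j : ℂ) := by
  set W := star U * (hA.eigenvectorUnitary : Matrix n n ℂ)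
  have hconj : star U * A * U = W * diagonal (RCLike.ofReal ∘ hA.eigenvalues) * star W := by
    conv_lhs => rw [hA.spectral_theorem, Unitary.conjStarAlgAut_apply]
    simp only [W, star_mul, star_star, Matrix.mul_assoc]
  rw [hconj, mul_apply, mulVec, dotProduct, Complex.ofReal_sum]
  refine sum_congr rfl fun i _ => ?_
  simp only [mul_diagonal, star_apply, RCLike.star_def, map_apply, Function.comp_apply]
  rw [mul_right_comm, Complex.mul_conj]
  push_cast
  rfl

theorem Matrix.PosSemidef.entropyDefect_re_star_mul_mul_diag_le {x : Matrix n n ℂ}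
    (hx : x.PosSemidef) {U : Matrix n n ℂ} (hU : U ∈ unitaryGroup n ℂ) :
    entropyDefect (fun j => ((star U * x * U) j j).re) ≤ entropyDefect hx.1.eigenvalues := by
  have hW : star U * (hx.1.eigenvectorUnitary : Matrix n n ℂ) ∈ unitaryGroup n ℂ :=
    mul_mem (Unitary.star_mem hU) hx.1.eigenvectorUnitary.2
  have hdiag : (fun j => ((star U * x * U) j j).re) =
      (star U * hx.1.eigenvectorUnitary).map Complex.normSq *ᵥ hx.1.eigenvalues := by
    ext j
    rw [hx.1.star_mul_mul_diag U j, Complex.ofReal_re]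
  rw [hdiag]
  exact entropyDefect_mulVec_le (map_normSq_mem_doublyStochastic hW) hx.eigenvalues_nonneg

theorem Matrix.PosSemidef.entropyDefect_eigenvalues_add_le {x y : Matrix n n ℂ}
    (hx : x.PosSemidef) (hy : y.PosSemidef) :
    entropyDefect (hx.add hy).1.eigenvalues ≤
      entropyDefect hx.1.eigenvalues + entropyDefect hy.1.eigenvalues := by
  set U := (hx.add hy).1.eigenvectorUnitary
  have hdiag_nonneg {z : Matrix n n ℂ} (hz : z.PosSemidef) :
      0 ≤ fun j => ((star (U : Matrix n n ℂ) * z * U) j j).re := fun j =>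
    (Complex.nonneg_iff.mp ((hz.conjTranspose_mul_mul_same (U : Matrix n n ℂ)).diag_nonneg)).1
  have hsplit : (hx.add hy).1.eigenvalues =
      (fun j => ((star (U : Matrix n n ℂ) * x * U) j j).re) +
        fun j => ((star (U : Matrix n n ℂ) * y * U) j j).re := by
    ext j
    have h := congr_fun₂ (hx.add hy).1.conjStarAlgAut_star_eigenvectorUnitary j j
    simp only [Unitary.conjStarAlgAut_apply, Unitary.coe_star, star_star, Matrix.mul_add,
      Matrix.add_mul, add_apply, Complex.coe_algebraMap, diagonal_apply_eq,
      Function.comp_apply] at h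
    simpa using (congrArg Complex.re h).symm
  rw [hsplit]
  exact (entropyDefect_add_le (hdiag_nonneg hx) (hdiag_nonneg hy)).trans
    (add_le_add (hx.entropyDefect_re_star_mul_mul_diag_le U.2)
      (hy.entropyDefect_re_star_mul_mul_diag_le U.2))

theorem Matrix.IsHermitian.eta_tauR_sub_tauEta {A : Matrix n n ℂ} (hA : A.IsHermitian) :
    eta (tauR A) - tauEta A =
      (entropyDefect hA.eigenvalues + A.trace.re * log (Fintype.card n)) / Fintype.card n := by
  have htrace : A.trace.re = ∑ i, hA.eigenvalues i := by
    simp [hA.trace_eq_sum_eigenvalues]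
  have hinv : negMulLog (Fintype.card n : ℝ)⁻¹ =
      (Fintype.card n : ℝ)⁻¹ * log (Fintype.card n) := by
    simp [negMulLog, log_inv]
  rw [tauR, tauEta, dif_pos hA, eta_eq_negMulLog, div_eq_mul_inv, negMulLog_mul, hinv, htrace,
    entropyDefect]
  ring

end MatrixEntropyDefect

theorem entropy_defect_subadditive_general {n : Type*} [Fintype n] [DecidableEq n]
    (x y : Matrix n n ℂ) (hx : x.PosSemidef) (hy : y.PosSemidef) :
    eta (tauR (x + y)) - tauEta (x + y) ≤
      (eta (tauR x) - tauEta x) + (eta (tauR y) - tauEta y) := by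
  rw [(hx.add hy).1.eta_tauR_sub_tauEta, hx.1.eta_tauR_sub_tauEta, hy.1.eta_tauR_sub_tauEta,
    ← add_div, trace_add, Complex.add_re]
  refine div_le_div_of_nonneg_right ?_ (Nat.cast_nonneg _)
  linarith [hx.entropyDefect_eigenvalues_add_le hy]

/-- Inequality (2.5): subadditivity of the entropy defect `x ↦ η(τ(x)) − τ(η(x))` for
positive semidefinite matrices. -/
theorem entropy_defect_subadditive {n : Type*} [Fintype n] [DecidableEq n] [Nonempty n]
    (x y : Matrix n n ℂ) (hx : x.PosSemidef) (hy : y.PosSemidef) :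
    eta (tauR (x + y)) - tauEta (x + y) ≤
      (eta (tauR x) - tauEta x) + (eta (tauR y) - tauEta y) :=
  entropy_defect_subadditive_general x y hx hy
end

section
/- Fix a nonempty finite index set of cardinality n and let M be the algebra of n×n complex matrices with normalized trace τ(A) = Tr(A)/n. For positive definite matrices a, b ∈ M define the relative entropy S(a,b) = τ(a·(log a − log b)), where log is applied via the spectral decomposition. Let ρ, σ, σ' ∈ M be positive definite with σ' ≤ σ (i.e. σ − σ' is positive semidefinite). Then S(ρ, σ) ≤ S(ρ, σ'). -/
open scoped ComplexOrder

/-- Apply a real function to a Hermitian matrix via the spectral decomposition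
(junk value `0` for non-Hermitian matrices). -/
noncomputable def matFun {n : Type*} [Fintype n] [DecidableEq n]
    (f : ℝ → ℝ) (A : Matrix n n ℂ) : Matrix n n ℂ :=
  if hA : A.IsHermitian then hA.cfc f else 0

/-- The relative entropy `S(a,b) = τ(a(log a − log b))` with respect to the
normalized trace `τ = Tr/n`, for positive definite matrices. -/
noncomputable def relEnt {n : Type*} [Fintype n] [DecidableEq n]
    (a b : Matrix n n ℂ) : ℝ :=
  ((a * (matFun Real.log a - matFun Real.log b)).trace).re / (Fintype.card n)

/-!
The logarithm is operator monotone, so `σ' ≤ σ` gives `log σ' ≤ log σ` in the Loewner order.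
Pairing with a positive matrix under the trace preserves this order, because
`tr(ρ X) = tr(C X C*)` for `ρ = C* C`. Hence `S(ρ, σ') - S(ρ, σ) = τ(ρ (log σ - log σ')) ≥ 0`.
-/

open scoped MatrixOrder Matrix.Norms.L2Operator

theorem Matrix.PosSemidef.trace_mul_nonneg {n 𝕜 : Type*} [Fintype n] [RCLike 𝕜]
    {A B : Matrix n n 𝕜} (hA : A.PosSemidef) (hB : B.PosSemidef) : 0 ≤ (A * B).trace := by
  classical
  obtain ⟨C, rfl⟩ := CStarAlgebra.nonneg_iff_eq_star_mul_self.mp hA.nonneg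
  rw [Matrix.star_eq_conjTranspose, Matrix.mul_assoc, Matrix.trace_mul_comm]
  exact (hB.mul_mul_conjTranspose_same C).trace_nonneg

section MatFun

variable {n : Type*} [Fintype n] [DecidableEq n]

theorem matFun_eq_cfc (f : ℝ → ℝ) (A : Matrix n n ℂ) : matFun f A = cfc f A := by
  by_cases hA : A.IsHermitian
  · rw [matFun, dif_pos hA, hA.cfc_eq]
  · rw [matFun, dif_neg hA]
    exact (cfc_apply_of_not_predicate A hA).symm

theorem matFun_log_le_matFun_log {A B : Matrix n n ℂ} (hA : A.PosDef) (hAB : A ≤ B) :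
    matFun Real.log A ≤ matFun Real.log B := by
  simp only [matFun_eq_cfc]
  exact CFC.log_le_log hAB hA.isStrictlyPositive

end MatFun

theorem relEnt_antitone_right_general {n : Type*} [Fintype n] [DecidableEq n]
    (ρ σ σ' : Matrix n n ℂ) (hρ : ρ.PosDef) (hσ' : σ'.PosDef)
    (hle : (σ - σ').PosSemidef) :
    relEnt ρ σ ≤ relEnt ρ σ' := by
  have hgap : 0 ≤ (ρ * (matFun Real.log σ - matFun Real.log σ')).trace :=
    hρ.posSemidef.trace_mul_nonneg (matFun_log_le_matFun_log hσ' hle)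
  have hsplit : ρ * (matFun Real.log ρ - matFun Real.log σ') =
      ρ * (matFun Real.log ρ - matFun Real.log σ) +
        ρ * (matFun Real.log σ - matFun Real.log σ') := by
    rw [← Matrix.mul_add, sub_add_sub_cancel]
  unfold relEnt
  rw [hsplit, Matrix.trace_add, Complex.add_re]
  gcongr
  exact le_add_of_nonneg_right (Complex.nonneg_iff.mp hgap).1

/-- Monotonicity of relative entropy in the second variable (inequality (2.7)):
if `σ' ≤ σ` then `S(ρ, σ) ≤ S(ρ, σ')`. -/
theorem relEnt_antitone_right {n : Type*} [Fintype n] [DecidableEq n] [Nonempty n]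
    (ρ σ σ' : Matrix n n ℂ) (hρ : ρ.PosDef) (hσ : σ.PosDef) (hσ' : σ'.PosDef)
    (hle : (σ - σ').PosSemidef) :
    relEnt ρ σ ≤ relEnt ρ σ' :=
  relEnt_antitone_right_general ρ σ σ' hρ hσ' hle
end

section
/- Let Φ be a complex-linear map from the n×n complex matrices to the m×m complex matrices such that Φ(1) = 1 and Φ maps positive semidefinite matrices to positive semidefinite matrices. Let η : ℝ → ℝ be η(t) = −t log t (with η(0) = 0), applied to positive semidefinite matrices via the spectral decomposition. Then for every positive semidefinite n×n matrix x, Φ(η(x)) ≤ η(Φ(x)), where ≤ is the Loewner order (a ≤ b iff b − a is positive semidefinite). -/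
/-!
For `t ≥ 0`, `η t = ∫₀^∞ (t / (t + s) - t / (1 + s)) ds`, and the integrand equals
`1 - s / (t + s) - t / (1 + s)`. Writing `x = ∑ λᵢ Pᵢ` spectrally, the matrices `Bᵢ = Φ Pᵢ` are
positive, sum to `1`, and `Φ x = ∑ λᵢ Bᵢ`, so it suffices to show `∑ η(λᵢ) Bᵢ ≤ η(∑ λᵢ Bᵢ)`.
Tested against a vector `v`, both sides become integrals of the kernel against two finite
measures with the same mass and the same mean, and the inequality reduces to the resolvent bound
`⟪v, (∑ (λᵢ + s) Bᵢ)⁻¹ v⟫ ≤ ∑ ⟪v, Bᵢ v⟫ / (λᵢ + s)`. That bound follows by summing the AM–GM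
inequalities `2 Re ⟪w, Bᵢ v⟫ ≤ (λᵢ + s) ⟪w, Bᵢ w⟫ + ⟪v, Bᵢ v⟫ / (λᵢ + s)` at
`w = (∑ (λᵢ + s) Bᵢ)⁻¹ v`.
-/

open scoped ComplexOrder

open MeasureTheory Set Filter Topology

noncomputable def etaKernel (t s : ℝ) : ℝ := t / (t + s) - t / (1 + s)

lemma hasDerivAt_mul_log_sub_log {t s : ℝ} (ht : 0 < t) (hs : 0 ≤ s) :
    HasDerivAt (fun s => t * (Real.log (t + s) - Real.log (1 + s))) (etaKernel t s) s := by
  have h₁ := ((hasDerivAt_id s).const_add t).log (by positivity)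
  have h₂ := ((hasDerivAt_id s).const_add 1).log (by positivity)
  refine ((h₁.sub h₂).const_mul t).congr_deriv ?_
  simp only [etaKernel, id]
  ring

lemma tendsto_mul_log_sub_log (t : ℝ) :
    Tendsto (fun s => t * (Real.log (t + s) - Real.log (1 + s))) atTop (𝓝 0) := by
  have h := (Real.tendsto_log_comp_add_sub_log t).sub (Real.tendsto_log_comp_add_sub_log 1)
  rw [sub_zero] at h
  simpa [add_comm] using h.const_mul t

lemma integrableOn_etaKernel {t : ℝ} (ht : 0 ≤ t) : IntegrableOn (etaKernel t) (Ioi 0) := by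
  rcases ht.eq_or_lt with rfl | ht
  · exact integrableOn_zero.congr_fun (fun s _ => by simp [etaKernel]) measurableSet_Ioi
  have hderiv := fun s (hs : s ∈ Ici (0 : ℝ)) => hasDerivAt_mul_log_sub_log ht hs
  rcases le_total t 1 with h | h
  · refine integrableOn_Ioi_deriv_of_nonneg' hderiv (fun s (hs : 0 < s) => ?_)
      (tendsto_mul_log_sub_log t)
    exact sub_nonneg.2 (div_le_div_of_nonneg_left ht.le (by positivity) (by linarith))
  · refine integrableOn_Ioi_deriv_of_nonpos' hderiv (fun s (hs : 0 < s) => ?_)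
      (tendsto_mul_log_sub_log t)
    exact sub_nonpos.2 (div_le_div_of_nonneg_left ht.le (by positivity) (by linarith))

lemma integral_etaKernel {t : ℝ} (ht : 0 ≤ t) : ∫ s in Ioi 0, etaKernel t s = eta t := by
  rcases ht.eq_or_lt with rfl | ht
  · simp [etaKernel, eta]
  rw [integral_Ioi_of_hasDerivAt_of_tendsto' (fun s hs => hasDerivAt_mul_log_sub_log ht hs)
    (integrableOn_etaKernel ht.le) (tendsto_mul_log_sub_log t)]
  simp [eta]

lemma sum_etaKernel_mul {ι : Type*} [Fintype ι] (t w : ι → ℝ) (ht : ∀ i, 0 ≤ t i) {s : ℝ}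
    (hs : 0 < s) :
    ∑ i, etaKernel (t i) s * w i
      = ∑ i, w i - s * ∑ i, w i / (t i + s) - (∑ i, t i * w i) / (1 + s) := by
  rw [Finset.mul_sum, Finset.sum_div, ← Finset.sum_sub_distrib, ← Finset.sum_sub_distrib]
  refine Finset.sum_congr rfl fun i _ => ?_
  have : t i + s ≠ 0 := by linarith [ht i]
  simp only [etaKernel]
  field_simp
  ring

lemma integral_sum_etaKernel_mul {ι : Type*} [Fintype ι] (t w : ι → ℝ) (ht : ∀ i, 0 ≤ t i) :
    ∫ s in Ioi 0, ∑ i, etaKernel (t i) s * w i = ∑ i, eta (t i) * w i := by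
  rw [integral_finsetSum _ fun i _ => (integrableOn_etaKernel (ht i)).mul_const _]
  simp only [integral_mul_const, integral_etaKernel (ht _)]

theorem sum_eta_mul_le_of_stieltjes_le {ι κ : Type*} [Fintype ι] [Fintype κ]
    (t b : ι → ℝ) (u q : κ → ℝ) (ht : ∀ i, 0 ≤ t i) (hu : ∀ j, 0 ≤ u j)
    (hmass : ∑ i, b i = ∑ j, q j) (hmean : ∑ i, t i * b i = ∑ j, u j * q j)
    (hstieltjes : ∀ s, 0 < s → ∑ j, q j / (u j + s) ≤ ∑ i, b i / (t i + s)) :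
    ∑ i, eta (t i) * b i ≤ ∑ j, eta (u j) * q j := by
  rw [← integral_sum_etaKernel_mul t b ht, ← integral_sum_etaKernel_mul u q hu]
  refine setIntegral_mono_on
    (integrable_finsetSum _ fun i _ => (integrableOn_etaKernel (ht i)).mul_const _)
    (integrable_finsetSum _ fun j _ => (integrableOn_etaKernel (hu j)).mul_const _)
    measurableSet_Ioi fun s (hs : 0 < s) => ?_
  rw [sum_etaKernel_mul t b ht hs, sum_etaKernel_mul u q hu hs, hmass, hmean]
  gcongr
  exact hstieltjes s hs

open Matrix

namespace Matrix.IsHermitian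

variable {𝕜 n : Type*} [RCLike 𝕜] [Fintype n] [DecidableEq n] {A : Matrix n n 𝕜}

noncomputable def spectralProj (hA : A.IsHermitian) (j : n) : Matrix n n 𝕜 :=
  Unitary.conjStarAlgAut 𝕜 _ hA.eigenvectorUnitary (diagonal (Pi.single j 1))

lemma sum_smul_spectralProj (hA : A.IsHermitian) (c : n → 𝕜) :
    ∑ j, c j • hA.spectralProj j
      = Unitary.conjStarAlgAut 𝕜 _ hA.eigenvectorUnitary (diagonal c) := by
  simp only [spectralProj, ← map_smul, ← map_sum]
  congr
  ext k l
  by_cases hkl : k = l <;> simp [Matrix.sum_apply, hkl, Pi.single_apply]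

lemma sum_real_smul_spectralProj (hA : A.IsHermitian) (c : n → ℝ) :
    ∑ j, c j • hA.spectralProj j
      = Unitary.conjStarAlgAut 𝕜 _ hA.eigenvectorUnitary (diagonal (RCLike.ofReal ∘ c)) := by
  simp only [RCLike.real_smul_eq_coe_smul (K := 𝕜), ← sum_smul_spectralProj]
  rfl

lemma cfc_eq_sum_smul_spectralProj (hA : A.IsHermitian) (f : ℝ → ℝ) :
    hA.cfc f = ∑ j, f (hA.eigenvalues j) • hA.spectralProj j := by
  rw [sum_real_smul_spectralProj]
  rfl

lemma eq_sum_smul_spectralProj (hA : A.IsHermitian) :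
    A = ∑ j, hA.eigenvalues j • hA.spectralProj j := by
  rw [sum_real_smul_spectralProj]
  exact hA.spectral_theorem

lemma sum_spectralProj (hA : A.IsHermitian) : ∑ j, hA.spectralProj j = 1 := by
  simpa using hA.sum_smul_spectralProj 1

lemma sum_smul_spectralProj_mul (hA : A.IsHermitian) (c d : n → ℝ) :
    (∑ j, c j • hA.spectralProj j) * (∑ j, d j • hA.spectralProj j)
      = ∑ j, (c j * d j) • hA.spectralProj j := by
  simp only [sum_real_smul_spectralProj, ← map_mul, diagonal_mul_diagonal]
  simp [Function.comp_def]

lemma posSemidef_spectralProj (hA : A.IsHermitian) (j : n) : (hA.spectralProj j).PosSemidef := by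
  rw [spectralProj, Unitary.conjStarAlgAut_apply]
  exact (PosSemidef.diagonal (Pi.single_nonneg.2 zero_le_one)).mul_mul_conjTranspose_same _

end Matrix.IsHermitian

namespace Matrix

lemma isHermitian_sum_smul {𝕜 n ι : Type*} [RCLike 𝕜] [Fintype ι]
    {B : ι → Matrix n n 𝕜} (hB : ∀ i, (B i).IsHermitian) (c : ι → ℝ) :
    (∑ i, c i • B i).IsHermitian :=
  isSelfAdjoint_sum _ fun i _ => (hB i).smul (IsSelfAdjoint.all (c i))

section
open RCLike

variable {𝕜 n ι : Type*} [RCLike 𝕜] [Fintype n] [Fintype ι]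

lemma dotProduct_sum_smul_mulVec {B : ι → Matrix n n 𝕜} (hB : ∀ i, (B i).IsHermitian)
    (c : ι → ℝ) (v : n → 𝕜) :
    star v ⬝ᵥ ((∑ i, c i • B i) *ᵥ v) = ((∑ i, c i * re (star v ⬝ᵥ (B i *ᵥ v)) : ℝ) : 𝕜) := by
  simp only [sum_mulVec, dotProduct_sum, smul_mulVec, dotProduct_smul, ofReal_sum, ofReal_mul,
    real_smul_eq_coe_smul (K := 𝕜), smul_eq_mul]
  refine Finset.sum_congr rfl fun i _ => congrArg _ ?_
  exact RCLike.ext_iff.2 ⟨by simp, by simp [(hB i).im_star_dotProduct_mulVec_self]⟩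

lemma sum_re_dotProduct_mulVec_of_sum_eq_one [DecidableEq n] {B : ι → Matrix n n 𝕜}
    (hsum : ∑ i, B i = 1) (v w : n → 𝕜) :
    ∑ i, re (star w ⬝ᵥ (B i *ᵥ v)) = re (star w ⬝ᵥ v) := by
  rw [← map_sum, ← dotProduct_sum, ← sum_mulVec, hsum, one_mulVec]

lemma two_mul_re_dotProduct_mulVec_le {B : Matrix n n 𝕜} (hB : B.PosSemidef) {c : ℝ} (hc : 0 < c)
    (v w : n → 𝕜) :
    2 * re (star w ⬝ᵥ (B *ᵥ v))
      ≤ c * re (star w ⬝ᵥ (B *ᵥ w)) + re (star v ⬝ᵥ (B *ᵥ v)) / c := by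
  have hswap : re (star v ⬝ᵥ (B *ᵥ w)) = re (star w ⬝ᵥ (B *ᵥ v)) := by
    rw [star_dotProduct, star_mulVec, ← dotProduct_mulVec, hB.1.eq, star_def, conj_re]
  have h := hB.re_dotProduct_nonneg (c • w - v)
  simp only [star_sub, star_smul, star_trivial, mulVec_sub, mulVec_smul, dotProduct_sub,
    sub_dotProduct, smul_dotProduct, dotProduct_smul, map_sub, smul_re, hswap] at h
  rw [add_div' _ _ _ hc.ne', le_div_iff₀ hc]
  linarith

lemma re_dotProduct_le_sum_div_of_mulVec_eq [DecidableEq n] {B : ι → Matrix n n 𝕜}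
    (hB : ∀ i, (B i).PosSemidef) (hsum : ∑ i, B i = 1) {c : ι → ℝ} (hc : ∀ i, 0 < c i)
    {v w : n → 𝕜} (hw : (∑ i, c i • B i) *ᵥ w = v) :
    re (star w ⬝ᵥ v) ≤ ∑ i, re (star v ⬝ᵥ (B i *ᵥ v)) / c i := by
  have hquad : re (star w ⬝ᵥ v) = ∑ i, c i * re (star w ⬝ᵥ (B i *ᵥ w)) := by
    rw [← hw, dotProduct_sum_smul_mulVec (fun i => (hB i).1), ofReal_re]
  have hAMGM := Finset.sum_le_sum fun i (_ : i ∈ Finset.univ) =>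
    two_mul_re_dotProduct_mulVec_le (hB i) (hc i) v w
  rw [← Finset.mul_sum, sum_re_dotProduct_mulVec_of_sum_eq_one hsum, Finset.sum_add_distrib,
    ← hquad] at hAMGM
  linarith

lemma sum_re_spectralProj_div_le [DecidableEq n] {B : ι → Matrix n n 𝕜}
    (hB : ∀ i, (B i).PosSemidef) (hsum : ∑ i, B i = 1) {t : ι → ℝ} (ht : ∀ i, 0 ≤ t i)
    (hA : (∑ i, t i • B i).IsHermitian) {s : ℝ} (hs : 0 < s) (v : n → 𝕜) :
    ∑ j, re (star v ⬝ᵥ (hA.spectralProj j *ᵥ v)) / (hA.eigenvalues j + s)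
      ≤ ∑ i, re (star v ⬝ᵥ (B i *ᵥ v)) / (t i + s) := by
  have hApos : (∑ i, t i • B i).PosSemidef := posSemidef_sum _ fun i _ => (hB i).smul (ht i)
  have hν : ∀ j, hA.eigenvalues j + s ≠ 0 := fun j => by linarith [hApos.eigenvalues_nonneg j]
  set w := (∑ j, (hA.eigenvalues j + s)⁻¹ • hA.spectralProj j) *ᵥ v
  have hshift : ∑ i, (t i + s) • B i = ∑ j, (hA.eigenvalues j + s) • hA.spectralProj j := by
    simp only [add_smul, Finset.sum_add_distrib, ← Finset.smul_sum, hsum, hA.sum_spectralProj,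
      ← hA.eq_sum_smul_spectralProj]
  have hw : (∑ i, (t i + s) • B i) *ᵥ w = v := by
    rw [hshift, mulVec_mulVec, hA.sum_smul_spectralProj_mul]
    simp [mul_inv_cancel₀ (hν _), hA.sum_spectralProj]
  calc ∑ j, re (star v ⬝ᵥ (hA.spectralProj j *ᵥ v)) / (hA.eigenvalues j + s)
      = re (star w ⬝ᵥ v) := by
        rw [star_dotProduct, star_def, conj_re,
          dotProduct_sum_smul_mulVec (fun j => (hA.posSemidef_spectralProj j).1), ofReal_re]
        simp only [div_eq_inv_mul]
    _ ≤ ∑ i, re (star v ⬝ᵥ (B i *ᵥ v)) / (t i + s) :=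
        re_dotProduct_le_sum_div_of_mulVec_eq hB hsum (fun i => by linarith [ht i]) hw

end

end Matrix

theorem posSemidef_matFun_eta_sum_smul_sub {n ι : Type*} [Fintype n] [DecidableEq n] [Fintype ι]
    {B : ι → Matrix n n ℂ} (hB : ∀ i, (B i).PosSemidef) (hsum : ∑ i, B i = 1) {t : ι → ℝ}
    (ht : ∀ i, 0 ≤ t i) :
    (matFun eta (∑ i, t i • B i) - ∑ i, eta (t i) • B i).PosSemidef := by
  have hA : (∑ i, t i • B i).PosSemidef := posSemidef_sum _ fun i _ => (hB i).smul (ht i)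
  have hBH := fun i => (hB i).1
  have hPH := fun j => (hA.1.posSemidef_spectralProj j).1
  rw [matFun, dif_pos hA.1, hA.1.cfc_eq_sum_smul_spectralProj]
  refine .of_dotProduct_mulVec_nonneg
    ((isHermitian_sum_smul hPH _).sub (isHermitian_sum_smul hBH _)) fun v => ?_
  rw [sub_mulVec, dotProduct_sub, dotProduct_sum_smul_mulVec hPH,
    dotProduct_sum_smul_mulVec hBH, ← RCLike.ofReal_sub, RCLike.ofReal_nonneg, sub_nonneg]
  refine sum_eta_mul_le_of_stieltjes_le _ _ _ _ ht hA.eigenvalues_nonneg ?_ ?_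
    fun s hs => sum_re_spectralProj_div_le hB hsum ht hA.1 hs v
  · rw [sum_re_dotProduct_mulVec_of_sum_eq_one hsum,
      sum_re_dotProduct_mulVec_of_sum_eq_one hA.1.sum_spectralProj]
  · apply RCLike.ofReal_injective (K := ℂ)
    rw [← dotProduct_sum_smul_mulVec hBH, ← dotProduct_sum_smul_mulVec hPH,
      ← hA.1.eq_sum_smul_spectralProj]

/-- Jensen's operator inequality for the entropy function: if `Φ` is a unital positive
linear map between matrix algebras, then `Φ(η(x)) ≤ η(Φ(x))` in the Loewner order for
every positive semidefinite `x`. -/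
theorem eta_jensen_of_unital_positive
    {p q : Type*} [Fintype p] [DecidableEq p] [Fintype q] [DecidableEq q]
    (Φ : Matrix p p ℂ →ₗ[ℂ] Matrix q q ℂ)
    (hΦ1 : Φ 1 = 1)
    (hΦpos : ∀ a : Matrix p p ℂ, a.PosSemidef → (Φ a).PosSemidef)
    (x : Matrix p p ℂ) (hx : x.PosSemidef) :
    (matFun eta (Φ x) - Φ (matFun eta x)).PosSemidef := by
  have hxH : x.IsHermitian := hx.1
  have hΦx : Φ x = ∑ i, hxH.eigenvalues i • Φ (hxH.spectralProj i) := by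
    conv_lhs => rw [hxH.eq_sum_smul_spectralProj]
    simp only [map_sum, LinearMap.map_smul_of_tower]
  have hΦη : Φ (matFun eta x) = ∑ i, eta (hxH.eigenvalues i) • Φ (hxH.spectralProj i) := by
    simp only [matFun, dif_pos hxH, hxH.cfc_eq_sum_smul_spectralProj, map_sum,
      LinearMap.map_smul_of_tower]
  rw [hΦx, hΦη]
  exact posSemidef_matFun_eta_sum_smul_sub (fun i => hΦpos _ (hxH.posSemidef_spectralProj i))
    (by rw [← map_sum, hxH.sum_spectralProj, hΦ1]) hx.eigenvalues_nonneg
end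

section
/- Let H and K be Hermitian n×n complex matrices with H ≤ K (i.e. K − H is positive semidefinite). Then Tr(exp H) ≤ Tr(exp K); equivalently, ∑_l exp(λ_l(H)) ≤ ∑_l exp(λ_l(K)), where λ_l(·) denote the eigenvalues listed with multiplicity. -/
/-!
Let `u i` be an orthonormal eigenbasis of `H`, with eigenvalues `λ i`, and let `f` be convex and
nondecreasing. Then
`Tr f(H) = ∑ f(λ i) = ∑ f⟨u i, H u i⟩ ≤ ∑ f⟨u i, K u i⟩ ≤ ∑ ⟨u i, f(K) u i⟩ = Tr f(K)`:
the first inequality is `H ≤ K` together with the monotonicity of `f`, the second is Jensen's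
inequality for the probability weights `|⟨v j, u i⟩|²`, where `v` is an orthonormal eigenbasis of
`K`. The theorem is the case `f = exp`.
-/

open scoped ComplexOrder

namespace Matrix

variable {n 𝕜 : Type*} [Fintype n] [RCLike 𝕜]

theorem trace_toEuclideanLin [DecidableEq n] (M : Matrix n n 𝕜) :
    LinearMap.trace 𝕜 _ (toEuclideanLin M) = M.trace := by
  rw [LinearMap.trace_eq_matrix_trace 𝕜 (EuclideanSpace.basisFun n 𝕜).toBasis]
  congr 1
  ext i j
  simp [LinearMap.toMatrix_apply]

theorem trace_eq_sum_star_dotProduct_mulVec [DecidableEq n]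
    (b : OrthonormalBasis n 𝕜 (EuclideanSpace 𝕜 n)) (M : Matrix n n 𝕜) :
    M.trace = ∑ i, star ⇑(b i) ⬝ᵥ (M *ᵥ ⇑(b i)) := by
  rw [← trace_toEuclideanLin, LinearMap.trace_eq_sum_inner _ b]
  simp [EuclideanSpace.inner_eq_star_dotProduct, dotProduct_comm]

theorem re_star_dotProduct_conj_diagonal_mulVec [DecidableEq n] (U : Matrix n n 𝕜) (d : n → ℝ)
    (v : n → 𝕜) :
    RCLike.re (star v ⬝ᵥ ((U * diagonal (RCLike.ofReal ∘ d) * star U) *ᵥ v)) =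
      ∑ j, ‖(star U *ᵥ v) j‖ ^ 2 * d j := by
  have h_conj : star v ⬝ᵥ ((U * diagonal (RCLike.ofReal ∘ d) * star U) *ᵥ v) =
      star (star U *ᵥ v) ⬝ᵥ (diagonal (RCLike.ofReal ∘ d) *ᵥ (star U *ᵥ v)) := by
    rw [← mulVec_mulVec, ← mulVec_mulVec, dotProduct_mulVec, star_mulVec, star_eq_conjTranspose,
      conjTranspose_conjTranspose]
  rw [h_conj, dotProduct, map_sum]
  refine Finset.sum_congr rfl fun j _ => ?_
  rw [mulVec_diagonal, Pi.star_apply, Function.comp_apply, ← mul_assoc, RCLike.star_def,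
    mul_right_comm, RCLike.conj_mul, ← RCLike.ofReal_pow, ← RCLike.ofReal_mul, RCLike.ofReal_re]

theorem sum_norm_sq_star_mulVec_of_mem_unitaryGroup [DecidableEq n] {U : Matrix n n 𝕜}
    (hU : U ∈ unitaryGroup n 𝕜) (v : n → 𝕜) :
    ∑ j, ‖(star U *ᵥ v) j‖ ^ 2 = RCLike.re (star v ⬝ᵥ v) := by
  simpa [Function.comp_def, Unitary.mul_star_self_of_mem hU] using
    (re_star_dotProduct_conj_diagonal_mulVec U 1 v).symm

namespace IsHermitian

theorem trace_cfc [DecidableEq n] {A : Matrix n n 𝕜} (hA : A.IsHermitian) (f : ℝ → ℝ) :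
    (cfc f A).trace = ∑ i, (f (hA.eigenvalues i) : 𝕜) := by
  rw [hA.cfc_eq, IsHermitian.cfc, Unitary.conjStarAlgAut_apply, trace_mul_cycle,
    Unitary.coe_star_mul_self, one_mul, trace_diagonal]
  rfl

theorem map_re_dotProduct_le_re_dotProduct_cfc [DecidableEq n] {A : Matrix n n 𝕜}
    (hA : A.IsHermitian) {f : ℝ → ℝ} (hf : ConvexOn ℝ Set.univ f) {v : n → 𝕜}
    (hv : star v ⬝ᵥ v = 1) :
    f (RCLike.re (star v ⬝ᵥ (A *ᵥ v))) ≤ RCLike.re (star v ⬝ᵥ (cfc f A *ᵥ v)) := by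
  rw [hA.cfc_eq, IsHermitian.cfc, Unitary.conjStarAlgAut_apply]
  conv_lhs => rw [hA.spectral_theorem, Unitary.conjStarAlgAut_apply]
  simp only [re_star_dotProduct_conj_diagonal_mulVec, ← smul_eq_mul (a := ‖_‖ ^ 2)]
  refine hf.map_sum_le (fun j _ => by positivity) ?_ (fun j _ => Set.mem_univ _)
  rw [sum_norm_sq_star_mulVec_of_mem_unitaryGroup hA.eigenvectorUnitary.2, hv, RCLike.one_re]

theorem re_trace_cfc_le_of_posSemidef_sub [DecidableEq n] {A B : Matrix n n 𝕜}
    (hA : A.IsHermitian) (hB : B.IsHermitian) (hAB : (B - A).PosSemidef) {f : ℝ → ℝ}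
    (hf_convex : ConvexOn ℝ Set.univ f) (hf_mono : Monotone f) :
    RCLike.re (cfc f A).trace ≤ RCLike.re (cfc f B).trace := by
  set u := hA.eigenvectorBasis
  have hu_unit (i : n) : star ⇑(u i) ⬝ᵥ ⇑(u i) = 1 := by
    rw [dotProduct_comm, ← EuclideanSpace.inner_eq_star_dotProduct, u.inner_eq_one]
  have h_eigenvalue_le (i : n) :
      hA.eigenvalues i ≤ RCLike.re (star ⇑(u i) ⬝ᵥ (B *ᵥ ⇑(u i))) := by
    have h_nonneg := hAB.re_dotProduct_nonneg (u i)
    rw [sub_mulVec, dotProduct_sub, map_sub, sub_nonneg] at h_nonneg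
    rwa [hA.eigenvalues_eq]
  calc RCLike.re (cfc f A).trace = ∑ i, f (hA.eigenvalues i) := by simp [hA.trace_cfc]
    _ ≤ ∑ i, f (RCLike.re (star ⇑(u i) ⬝ᵥ (B *ᵥ ⇑(u i)))) :=
      Finset.sum_le_sum fun i _ => hf_mono (h_eigenvalue_le i)
    _ ≤ ∑ i, RCLike.re (star ⇑(u i) ⬝ᵥ (cfc f B *ᵥ ⇑(u i))) :=
      Finset.sum_le_sum fun i _ => hB.map_re_dotProduct_le_re_dotProduct_cfc hf_convex (hu_unit i)
    _ = RCLike.re (cfc f B).trace := by rw [trace_eq_sum_star_dotProduct_mulVec u, map_sum]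

end IsHermitian

end Matrix

/-- The Peierls–Bogoliubov inequality (11.4) in the finite-dimensional case:
if `H ≤ K` in the Loewner order (i.e. `K − H` is positive semidefinite), then
`Tr(exp H) ≤ Tr(exp K)`. -/
theorem trace_exp_monotone {n : Type*} [Fintype n] [DecidableEq n]
    (H K : Matrix n n ℂ) (hH : H.IsHermitian) (hK : K.IsHermitian)
    (hle : (K - H).PosSemidef) :
    ((NormedSpace.exp H).trace).re ≤ ((NormedSpace.exp K).trace).re := by
  -- Matrices carry no global norm, and `CFC.real_exp_eq_normedSpace_exp` needs one.
  open scoped Matrix.Norms.L2Operator in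
  simpa only [RCLike.re_to_complex, CFC.real_exp_eq_normedSpace_exp hH.isSelfAdjoint,
    CFC.real_exp_eq_normedSpace_exp hK.isSelfAdjoint] using
    hH.re_trace_cfc_le_of_posSemidef_sub hK hle convexOn_exp Real.exp_monotone
end

section
/- Let K be a positive semidefinite n×n complex matrix with Tr(K) = 1, and let H be a Hermitian n×n complex matrix. With S(K) = ∑_l η(λ_l(K)) (η(t) = −t log t, η(0) = 0), equality S(K) − Re(Tr(K·H)) = log Tr(exp(−H)) holds if and only if K = (Tr(exp(−H)))⁻¹ · exp(−H). -/
open scoped ComplexOrder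

/-- The von Neumann entropy `S(K) = ∑_l η(λ_l(K))` of a Hermitian matrix `K`, where the
`λ_l(K)` are the eigenvalues with multiplicity (junk value `0` for non-Hermitian matrices). -/
noncomputable def vnEntropy {n : Type*} [Fintype n] [DecidableEq n] (K : Matrix n n ℂ) : ℝ :=
  if hK : K.IsHermitian then ∑ i, eta (hK.eigenvalues i) else 0

/-!
Diagonalize `K = V diag(μ) V*` and `H = U diag(λ) U*`. The matrix `c j i = |(V* U) j i|²` is
doubly stochastic and `Tr(K H) = ∑ c j i μ j λ i`. With the Gibbs weights
`ν i = e^{-λ i} / Z`, `Z = ∑ e^{-λ k}`, this gives Klein's identity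
`log Z - (S(K) - Tr(K H)) = ∑ c j i ν i klFun (μ j / ν i)`, a sum of nonnegative terms since
`klFun x = x log x + 1 - x ≥ 0` with equality only at `x = 1`. It vanishes iff `μ j = ν i`
whenever `(V* U) j i ≠ 0`, i.e. iff `diag(μ) V* U = V* U diag(ν)`, which says
`K = U diag(ν) U*`, the Gibbs state.
-/

open Matrix InformationTheory

lemma mul_klFun_div (a : ℝ) {b : ℝ} (hb : b ≠ 0) :
    b * klFun (a / b) = a * Real.log a - a * Real.log b - a + b := by
  rcases eq_or_ne a 0 with rfl | ha
  · simp [klFun]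
  · rw [klFun, Real.log_div ha hb]
    field_simp
    ring

lemma sum_sum_mul_klFun_eq_zero_iff {m n : Type*} [Fintype m] [Fintype n] {c : m → n → ℝ}
    (hc : ∀ j i, 0 ≤ c j i) {μ : m → ℝ} {ν : n → ℝ} (hμ : ∀ j, 0 ≤ μ j) (hν : ∀ i, 0 < ν i) :
    ∑ j, ∑ i, c j i * (ν i * klFun (μ j / ν i)) = 0 ↔ ∀ j i, c j i = 0 ∨ μ j = ν i := by
  have hterm : ∀ j i, 0 ≤ c j i * (ν i * klFun (μ j / ν i)) := fun j i =>
    mul_nonneg (hc j i) (mul_nonneg (hν i).le (klFun_nonneg (div_nonneg (hμ j) (hν i).le)))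
  simp only [Finset.sum_eq_zero_iff_of_nonneg fun j _ => Finset.sum_nonneg fun i _ => hterm j i,
    Finset.sum_eq_zero_iff_of_nonneg fun i _ => hterm _ i, Finset.mem_univ, true_implies]
  refine forall₂_congr fun j i => ?_
  rw [mul_eq_zero, mul_eq_zero, klFun_eq_zero_iff (div_nonneg (hμ j) (hν i).le),
    div_eq_one_iff_eq (hν i).ne', or_iff_right (hν i).ne']

section Gibbs

variable {n : Type*} [Fintype n]

noncomputable def gibbsWeight (E : n → ℝ) (i : n) : ℝ :=
  Real.exp (-E i) / ∑ k, Real.exp (-E k)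

section DoublyStochastic

variable [DecidableEq n] {c : Matrix n n ℝ}

lemma sum_sum_mul_left_of_mem_doublyStochastic (hc : c ∈ doublyStochastic ℝ n) (f : n → ℝ) :
    ∑ j, ∑ i, c j i * f j = ∑ j, f j := by
  simp only [← Finset.sum_mul, sum_row_of_mem_doublyStochastic hc, one_mul]

lemma sum_sum_mul_right_of_mem_doublyStochastic (hc : c ∈ doublyStochastic ℝ n) (g : n → ℝ) :
    ∑ j, ∑ i, c j i * g i = ∑ i, g i := by
  rw [Finset.sum_comm]
  simp only [← Finset.sum_mul, sum_col_of_mem_doublyStochastic hc, one_mul]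

end DoublyStochastic

variable [Nonempty n]

lemma sum_exp_neg_pos (E : n → ℝ) : 0 < ∑ k, Real.exp (-E k) :=
  Finset.sum_pos (fun _ _ => Real.exp_pos _) Finset.univ_nonempty

lemma gibbsWeight_pos (E : n → ℝ) (i : n) : 0 < gibbsWeight E i :=
  div_pos (Real.exp_pos _) (sum_exp_neg_pos E)

lemma log_gibbsWeight (E : n → ℝ) (i : n) :
    Real.log (gibbsWeight E i) = -E i - Real.log (∑ k, Real.exp (-E k)) := by
  rw [gibbsWeight, Real.log_div (Real.exp_pos _).ne' (sum_exp_neg_pos E).ne', Real.log_exp]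

lemma sum_gibbsWeight (E : n → ℝ) : ∑ i, gibbsWeight E i = 1 := by
  simp only [gibbsWeight, ← Finset.sum_div, div_self (sum_exp_neg_pos E).ne']

theorem sum_sum_mul_klFun_gibbsWeight [DecidableEq n] {c : Matrix n n ℝ}
    (hc : c ∈ doublyStochastic ℝ n) {μ : n → ℝ} (hμ : ∑ j, μ j = 1) (E : n → ℝ) :
    ∑ j, ∑ i, c j i * (gibbsWeight E i * klFun (μ j / gibbsWeight E i)) =
      Real.log (∑ k, Real.exp (-E k)) - (∑ j, eta (μ j) - ∑ j, ∑ i, c j i * (μ j * E i)) := by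
  set L := Real.log (∑ k, Real.exp (-E k))
  have hterm : ∀ j i, c j i * (gibbsWeight E i * klFun (μ j / gibbsWeight E i)) =
      c j i * (μ j * Real.log (μ j) + L * μ j - μ j) + c j i * gibbsWeight E i +
        c j i * (μ j * E i) := by
    intro j i
    rw [mul_klFun_div _ (gibbsWeight_pos E i).ne', log_gibbsWeight]
    ring
  simp only [hterm, Finset.sum_add_distrib, sum_sum_mul_left_of_mem_doublyStochastic hc,
    sum_sum_mul_right_of_mem_doublyStochastic hc, Finset.sum_sub_distrib, ← Finset.mul_sum,
    hμ, sum_gibbsWeight, eta, Finset.sum_neg_distrib]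
  ring

end Gibbs

section Spectral

variable {𝕜 n : Type*} [RCLike 𝕜] [Fintype n] [DecidableEq n]

lemma norm_sq_mem_doublyStochastic_of_mem_unitaryGroup {W : Matrix n n 𝕜}
    (hW : W ∈ unitaryGroup n 𝕜) : (of fun j i => ‖W j i‖ ^ 2) ∈ doublyStochastic ℝ n := by
  refine mem_doublyStochastic_iff_sum.mpr ⟨fun _ _ => sq_nonneg _, fun j => ?_, fun i => ?_⟩
  · have h := congr_fun₂ (mem_unitaryGroup_iff.mp hW) j j
    simp only [mul_apply, star_apply, RCLike.star_def, RCLike.mul_conj, one_apply_eq] at h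
    exact_mod_cast h
  · have h := congr_fun₂ (mem_unitaryGroup_iff'.mp hW) i i
    simp only [mul_apply, star_apply, RCLike.star_def, RCLike.conj_mul, one_apply_eq] at h
    exact_mod_cast h

lemma trace_conj_diagonal {U : Matrix n n 𝕜} (hU : U ∈ unitaryGroup n 𝕜) (d : n → 𝕜) :
    (U * diagonal d * star U).trace = ∑ i, d i := by
  rw [trace_mul_cycle, Unitary.star_mul_self_of_mem hU, one_mul, trace_diagonal]

lemma trace_conj_diagonal_mul_conj_diagonal (V U : Matrix n n 𝕜) (a b : n → ℝ) :
    (V * diagonal (RCLike.ofReal ∘ a) * star V * (U * diagonal (RCLike.ofReal ∘ b) * star U)).trace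
      = ((∑ j, ∑ i, ‖(star V * U) j i‖ ^ 2 * (a j * b i) : ℝ) : 𝕜) := by
  set W := star V * U
  have hcycle (X Y : Matrix n n 𝕜) :
      (V * X * star V * (U * Y * star U)).trace = (X * W * Y * star W).trace := by
    rw [star_mul, star_star]
    simp only [W, Matrix.mul_assoc]
    rw [trace_mul_comm V]
    simp only [Matrix.mul_assoc]
  rw [hcycle, trace, RCLike.ofReal_sum]
  refine Finset.sum_congr rfl fun j _ => ?_
  rw [diag_apply, mul_apply, RCLike.ofReal_sum]
  refine Finset.sum_congr rfl fun i _ => ?_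
  rw [mul_diagonal, diagonal_mul, star_apply, RCLike.star_def]
  simp only [Function.comp_apply]
  push_cast
  linear_combination (a j * b i : 𝕜) * RCLike.mul_conj (W j i)

lemma conj_diagonal_eq_conj_diagonal_iff {V U : Matrix n n 𝕜} (hV : V ∈ unitaryGroup n 𝕜)
    (hU : U ∈ unitaryGroup n 𝕜) (a b : n → 𝕜) :
    V * diagonal a * star V = U * diagonal b * star U ↔
      ∀ j i, (star V * U) j i = 0 ∨ a j = b i := by
  have hVa : star V * (V * diagonal a * star V * U) = diagonal a * (star V * U) := by
    simp only [← Matrix.mul_assoc, Unitary.star_mul_self_of_mem hV, Matrix.one_mul]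
  have hUb : star V * (U * diagonal b * star U * U) = star V * U * diagonal b := by
    simp only [Matrix.mul_assoc, Unitary.star_mul_self_of_mem hU, Matrix.mul_one]
  rw [← Unitary.mul_left_inj ⟨U, hU⟩, ← Unitary.mul_right_inj (star ⟨V, hV⟩), Unitary.coe_star]
  dsimp only
  rw [hVa, hUb, ← Matrix.ext_iff]
  refine forall₂_congr fun j i => ?_
  rw [diagonal_mul, mul_diagonal, mul_comm (a j), ← sub_eq_zero, ← mul_sub, mul_eq_zero,
    sub_eq_zero]

lemma exp_conj_diagonal {U : Matrix n n 𝕜} (hU : U ∈ unitaryGroup n 𝕜) (d : n → 𝕜) :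
    NormedSpace.exp (U * diagonal d * star U) = U * diagonal (NormedSpace.exp d) * star U := by
  have hinv : U⁻¹ = star U := inv_eq_right_inv (Unitary.mul_star_self_of_mem hU)
  rw [← hinv, Matrix.exp_conj _ _ (Unitary.isUnit_coe (U := ⟨U, hU⟩)),
    Matrix.exp_diagonal]

namespace Matrix.IsHermitian

variable {A B : Matrix n n 𝕜}

lemma eq_conj_diagonal (hA : A.IsHermitian) :
    A = (hA.eigenvectorUnitary : Matrix n n 𝕜) * diagonal (RCLike.ofReal ∘ hA.eigenvalues) *
      star (hA.eigenvectorUnitary : Matrix n n 𝕜) := by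
  conv_lhs => rw [hA.spectral_theorem]
  rw [Unitary.conjStarAlgAut_apply]

lemma trace_mul_eq_sum_norm_sq_mul (hA : A.IsHermitian) (hB : B.IsHermitian) :
    (A * B).trace = ((∑ j, ∑ i,
      ‖(star (hA.eigenvectorUnitary : Matrix n n 𝕜) * hB.eigenvectorUnitary) j i‖ ^ 2 *
        (hA.eigenvalues j * hB.eigenvalues i) : ℝ) : 𝕜) := by
  conv_lhs => rw [hA.eq_conj_diagonal, hB.eq_conj_diagonal]
  exact trace_conj_diagonal_mul_conj_diagonal _ _ _ _

lemma eq_conj_diagonal_iff (hA : A.IsHermitian) {U : Matrix n n 𝕜} (hU : U ∈ unitaryGroup n 𝕜)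
    (b : n → ℝ) :
    A = U * diagonal (RCLike.ofReal ∘ b) * star U ↔
      ∀ j i, (star (hA.eigenvectorUnitary : Matrix n n 𝕜) * U) j i = 0 ∨
        hA.eigenvalues j = b i := by
  conv_lhs => rw [hA.eq_conj_diagonal]
  simp only [conj_diagonal_eq_conj_diagonal_iff hA.eigenvectorUnitary.2 hU, Function.comp_apply,
    RCLike.ofReal_inj]

lemma exp_neg_eq_conj_diagonal (hA : A.IsHermitian) :
    NormedSpace.exp (-A) = (hA.eigenvectorUnitary : Matrix n n 𝕜) *
      diagonal (fun i => (Real.exp (-hA.eigenvalues i) : 𝕜)) *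
        star (hA.eigenvectorUnitary : Matrix n n 𝕜) := by
  conv_lhs => rw [hA.eq_conj_diagonal]
  rw [← Matrix.neg_mul, ← Matrix.mul_neg, diagonal_neg,
    exp_conj_diagonal hA.eigenvectorUnitary.2]
  congr
  ext i
  rw [Pi.coe_exp, Function.comp_apply, ← RCLike.ofReal_neg, Real.exp_eq_exp_ℝ]
  exact (NormedSpace.map_exp (RCLike.ofRealAm (K := 𝕜)) RCLike.continuous_ofReal _).symm

lemma trace_exp_neg (hA : A.IsHermitian) :
    (NormedSpace.exp (-A)).trace = ((∑ i, Real.exp (-hA.eigenvalues i) : ℝ) : 𝕜) := by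
  rw [hA.exp_neg_eq_conj_diagonal, trace_conj_diagonal hA.eigenvectorUnitary.2,
    RCLike.ofReal_sum]

lemma inv_trace_exp_neg_smul_eq_conj_diagonal (hA : A.IsHermitian) :
    (NormedSpace.exp (-A)).trace⁻¹ • NormedSpace.exp (-A) =
      (hA.eigenvectorUnitary : Matrix n n 𝕜) *
        diagonal (RCLike.ofReal ∘ gibbsWeight hA.eigenvalues) *
          star (hA.eigenvectorUnitary : Matrix n n 𝕜) := by
  rw [hA.trace_exp_neg, hA.exp_neg_eq_conj_diagonal, ← Matrix.smul_mul, ← Matrix.mul_smul,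
    ← diagonal_smul]
  congr
  ext i
  simp [gibbsWeight, div_eq_inv_mul]

end Matrix.IsHermitian

end Spectral

/-- The equality case of the finite-dimensional variational principle (11.1):
for a density matrix `K` and Hermitian `H`, `S(K) − Tr(K·H) = log Tr(e^{−H})`
holds if and only if `K` is the Gibbs state `(Tr e^{−H})⁻¹ · e^{−H}`. -/
theorem variational_principle_equality_iff {n : Type*} [Fintype n] [DecidableEq n]
    (K H : Matrix n n ℂ) (hK : K.PosSemidef) (htr : K.trace = 1) (hH : H.IsHermitian) :
    vnEntropy K - ((K * H).trace).re = Real.log (((NormedSpace.exp (-H)).trace).re) ↔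
      K = ((NormedSpace.exp (-H)).trace)⁻¹ • NormedSpace.exp (-H) := by
  have hKh : K.IsHermitian := hK.1
  have hμ : ∑ j, hKh.eigenvalues j = 1 := by
    simpa [htr, eq_comm] using congrArg Complex.re hKh.trace_eq_sum_eigenvalues
  have : Nonempty n :=
    Finset.univ_nonempty_iff.mp (Finset.nonempty_of_sum_ne_zero (hμ ▸ one_ne_zero))
  set W := star (hKh.eigenvectorUnitary : Matrix n n ℂ) * hH.eigenvectorUnitary
  have hW : W ∈ unitaryGroup n ℂ := (star hKh.eigenvectorUnitary * hH.eigenvectorUnitary).2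
  have hklein := sum_sum_mul_klFun_gibbsWeight
    (norm_sq_mem_doublyStochastic_of_mem_unitaryGroup hW) hμ hH.eigenvalues
  have hzero := sum_sum_mul_klFun_eq_zero_iff (c := of fun j i => ‖W j i‖ ^ 2)
    (fun _ _ => sq_nonneg _) hK.eigenvalues_nonneg (gibbsWeight_pos hH.eigenvalues)
  simp only [of_apply, sq_eq_zero_iff, norm_eq_zero] at hklein hzero
  rw [vnEntropy, dif_pos hKh, hH.inv_trace_exp_neg_smul_eq_conj_diagonal,
    hKh.eq_conj_diagonal_iff hH.eigenvectorUnitary.2, ← hzero, hklein,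
    hKh.trace_mul_eq_sum_norm_sq_mul hH, hH.trace_exp_neg, ← RCLike.re_to_complex,
    ← RCLike.re_to_complex, RCLike.ofReal_re, RCLike.ofReal_re]
  constructor <;> intro h <;> linarith
end
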